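/- In the fractional-order HK model, the minimum opinion never falls below its initial value: if x_m(k) = min_i x_i(k), then x_m(k) ≥ x_m(0) for all k ≥ 0. -/

import Mathlib

open Finset Filter Topology

/-- The Grünwald–Letnikov coefficient `a_k^{(α)} = (-1)^k * α(α-1)⋯(α-k+1)/k!`
(with `a_0 = 1`). -/
noncomputable def glCoeff (α : ℝ) (k : ℕ) : ℝ :=
  (-1) ^ k * (∏ i ∈ Finset.range k, (α - (i : ℝ))) / (Nat.factorial k : ℝ)

/-- Neighbor set of agent `i` at time `k` (includes `i` itself). -/
noncomputable def nbr {n : ℕ} (ε : ℝ) (x : ℕ → Fin n → ℝ) (k : ℕ) (i : Fin n) :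
    Finset (Fin n) :=
  Finset.univ.filter (fun j => |x k i - x k j| ≤ ε)

/-- The fractional-order Hegselmann–Krause dynamics. -/
def IsFracHK {n : ℕ} (ε α : ℝ) (x : ℕ → Fin n → ℝ) : Prop :=
  ∀ k i,
    x (k + 1) i =
      (∑ j ∈ (nbr ε x k i).erase i, x k j) / ((nbr ε x k i).card : ℝ) +
        (1 / ((nbr ε x k i).card : ℝ)) *
          ((∑ s ∈ Finset.range k, |glCoeff α (k + 1 - s)| * x s i) +
            (1 - ∑ s ∈ Finset.range k, |glCoeff α (k + 1 - s)|) * x k i)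

/-
Each update writes `x_i(k+1)` as a combination of the current opinions of `i`'s neighbours and of
`i`'s own past opinions `x_i(0), …, x_i(k)`. As `i` is its own neighbour (`ε ≥ 0`), the weights are
`1/|N|` for each of the `|N| - 1` neighbours `j ≠ i` and `1/|N|` times `|a_{k+1-s}|`, resp.
`1 - ∑ |a_{k+1-s}|`, for the memory terms. They are nonnegative and sum to `1` because
`∑_{j=2}^{k+1} |a_j| ≤ 1`, which follows from `a_j ≤ 0` for `j ≥ 1` together with
`∑_{j ≤ N} a_j^{(α)} = a_N^{(α-1)} ≥ 0`. Hence every new opinion is a convex combination of earlier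
ones, and by strong induction no opinion drops below the initial minimum.
-/

lemma glCoeff_zero (α : ℝ) : glCoeff α 0 = 1 := by
  simp [glCoeff]

lemma glCoeff_one (α : ℝ) : glCoeff α 1 = -α := by
  simp [glCoeff]

lemma glCoeff_succ (α : ℝ) (N : ℕ) :
    glCoeff α (N + 1) = glCoeff α N * (((N : ℝ) - α) / (N + 1)) := by
  unfold glCoeff
  rw [prod_range_succ, Nat.factorial_succ]
  push_cast
  field_simp
  ring

lemma glCoeff_succ_eq_mul_glCoeff_sub_one (α : ℝ) (N : ℕ) :
    glCoeff α (N + 1) = -(α / (N + 1)) * glCoeff (α - 1) N := by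
  unfold glCoeff
  rw [prod_range_succ', Nat.factorial_succ]
  push_cast
  simp_rw [sub_add_eq_sub_sub_swap]
  field_simp
  ring

lemma glCoeff_nonneg_of_nonpos {β : ℝ} (hβ : β ≤ 0) (N : ℕ) : 0 ≤ glCoeff β N := by
  induction N with
  | zero => simp [glCoeff_zero]
  | succ N ih =>
    rw [glCoeff_succ]
    have : (0 : ℝ) ≤ N := N.cast_nonneg
    exact mul_nonneg ih (div_nonneg (by linarith) (by positivity))

lemma glCoeff_nonpos {α : ℝ} (hα₀ : 0 ≤ α) (hα₁ : α ≤ 1) {j : ℕ} (hj : 1 ≤ j) :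
    glCoeff α j ≤ 0 := by
  induction j, hj using Nat.le_induction with
  | base => simpa [glCoeff_one] using hα₀
  | succ N hN ih =>
    rw [glCoeff_succ]
    have : (1 : ℝ) ≤ N := by exact_mod_cast hN
    exact mul_nonpos_of_nonpos_of_nonneg ih (div_nonneg (by linarith) (by positivity))

lemma sum_range_succ_glCoeff (α : ℝ) (N : ℕ) :
    ∑ j ∈ range (N + 1), glCoeff α j = glCoeff (α - 1) N := by
  induction N with
  | zero => simp [glCoeff_zero]
  | succ N ih =>
    rw [sum_range_succ, ih, glCoeff_succ_eq_mul_glCoeff_sub_one, glCoeff_succ]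
    field_simp
    ring

lemma sum_abs_glCoeff_le {α : ℝ} (hα₀ : 0 ≤ α) (hα₁ : α ≤ 1) (k : ℕ) :
    ∑ s ∈ range k, |glCoeff α (k + 1 - s)| ≤ 1 - α := by
  have hreflect : ∑ s ∈ range k, |glCoeff α (k + 1 - s)| = ∑ j ∈ range k, |glCoeff α (j + 2)| := by
    rw [← sum_range_reflect]
    refine sum_congr rfl fun s hs => ?_
    rw [mem_range] at hs
    congr 3
    omega
  have htail : ∑ j ∈ range k, glCoeff α (j + 2) = glCoeff (α - 1) (k + 1) - 1 + α := by
    rw [← sum_range_succ_glCoeff, sum_range_succ', sum_range_succ', glCoeff_zero, glCoeff_one]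
    ring
  rw [hreflect, sum_congr rfl fun j _ => abs_of_nonpos (glCoeff_nonpos hα₀ hα₁ (by omega)),
    sum_neg_distrib, htail]
  linarith [glCoeff_nonneg_of_nonpos (by linarith : α - 1 ≤ 0) (k + 1)]

lemma le_sum_mul_add_one_sub_sum_mul {ι : Type*} (t : Finset ι) {w y : ι → ℝ} {z m : ℝ}
    (hw : ∀ s ∈ t, 0 ≤ w s) (hsum : ∑ s ∈ t, w s ≤ 1) (hy : ∀ s ∈ t, m ≤ y s) (hz : m ≤ z) :
    m ≤ ∑ s ∈ t, w s * y s + (1 - ∑ s ∈ t, w s) * z :=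
  calc m = ∑ s ∈ t, w s * m + (1 - ∑ s ∈ t, w s) * m := by rw [← sum_mul]; ring
    _ ≤ _ := add_le_add (sum_le_sum fun s hs => mul_le_mul_of_nonneg_left (hy s hs) (hw s hs))
        (mul_le_mul_of_nonneg_left hz (by linarith))

lemma self_mem_nbr {n : ℕ} {ε : ℝ} (hε : 0 ≤ ε) (x : ℕ → Fin n → ℝ) (k : ℕ) (i : Fin n) :
    i ∈ nbr ε x k i := by
  simpa [nbr] using hε

namespace IsFracHK

variable {n : ℕ} {ε α : ℝ} {x : ℕ → Fin n → ℝ}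

lemma le_succ (hdyn : IsFracHK ε α x) (hε : 0 ≤ ε) (hα₀ : 0 ≤ α) (hα₁ : α ≤ 1) {m : ℝ} {k : ℕ}
    (hm : ∀ s ≤ k, ∀ i, m ≤ x s i) (i : Fin n) : m ≤ x (k + 1) i := by
  set N := nbr ε x k i
  have hcard : ((N.erase i).card : ℝ) + 1 = N.card := by
    exact_mod_cast card_erase_add_one (self_mem_nbr hε x k i)
  have hneighbours : ((N.erase i).card : ℝ) * m ≤ ∑ j ∈ N.erase i, x k j := by
    simpa using card_nsmul_le_sum (N.erase i) (x k) m fun j _ => hm k le_rfl j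
  have hmemory := le_sum_mul_add_one_sub_sum_mul (range k) (fun _ _ => abs_nonneg _)
    ((sum_abs_glCoeff_le hα₀ hα₁ k).trans (by linarith))
    (fun s hs => hm s (mem_range.1 hs).le i) (hm k le_rfl i)
  rw [hdyn k i, ← hcard, one_div_mul_eq_div, ← add_div, le_div_iff₀ (by positivity)]
  linarith

lemma le_of_forall_le_initial (hdyn : IsFracHK ε α x) (hε : 0 ≤ ε) (hα₀ : 0 ≤ α) (hα₁ : α ≤ 1)
    {m : ℝ} (hm : ∀ i, m ≤ x 0 i) (k : ℕ) (i : Fin n) : m ≤ x k i := by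
  induction k using Nat.strong_induction_on generalizing i with
  | _ k ih =>
    cases k with
    | zero => exact hm i
    | succ k => exact hdyn.le_succ hε hα₀ hα₁ (fun s hs => ih s (Nat.lt_succ_of_le hs)) i

end IsFracHK

theorem fracHK_min_ge_initial_general {n : ℕ} (hn : 0 < n) (ε α : ℝ)
    (hε : ε ∈ Set.Ioc (0:ℝ) 1) (hα : α ∈ Set.Ioo (0:ℝ) 1)
    (x : ℕ → Fin n → ℝ)
    (hdyn : IsFracHK ε α x) :
    ∀ k, Finset.univ.inf' (Finset.univ_nonempty_iff.2 ⟨⟨0, hn⟩⟩) (x 0) ≤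
      Finset.univ.inf' (Finset.univ_nonempty_iff.2 ⟨⟨0, hn⟩⟩) (x k) := fun k =>
  le_inf' _ _ fun i _ => hdyn.le_of_forall_le_initial hε.1.le hα.1.le hα.2.le
    (fun j => inf'_le _ (mem_univ j)) k i

theorem fracHK_min_ge_initial {n : ℕ} (hn : 0 < n) (ε α : ℝ)
    (hε : ε ∈ Set.Ioc (0:ℝ) 1) (hα : α ∈ Set.Ioo (0:ℝ) 1)
    (x : ℕ → Fin n → ℝ) (hx0 : ∀ i, x 0 i ∈ Set.Icc (0:ℝ) 1)
    (hdyn : IsFracHK ε α x) :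
    ∀ k, Finset.univ.inf' (Finset.univ_nonempty_iff.2 ⟨⟨0, hn⟩⟩) (x 0) ≤
      Finset.univ.inf' (Finset.univ_nonempty_iff.2 ⟨⟨0, hn⟩⟩) (x k) :=
  fracHK_min_ge_initial_general hn ε α hε hα x hdyn
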